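/- For the trefoil diagram D₃ with Δ = T - 1 + T⁻¹, Green function G as computed (the 7×7 matrix with entries in ℚ(T) given in the paper), crossings with s = +1 and (i,j) pairs (1,4), (5,2), (3,6), i.e. crossings (+1,1,4), (+1,5,2), (+1,3,6), and rotation numbers all zero except φ₄ = −1, the invariant ρ₁ = Δ²(Σ_c R₁(c) − Σ_k φ_k(g_{kk} − 1/2)) equals −T² + 2T − 2 + 2T⁻¹ − T⁻². -/

import Mathlib

noncomputable section

theorem vec7_five {α : Type*} {m : ℕ} (x : α) (u : Fin (m + 5) → α) :
    Matrix.vecCons x u 5 = Matrix.vecHead (Matrix.vecTail (Matrix.vecTail (Matrix.vecTail (Matrix.vecTail u)))) := rfl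
theorem vec7_six {α : Type*} {m : ℕ} (x : α) (u : Fin (m + 6) → α) :
    Matrix.vecCons x u 6 = Matrix.vecHead (Matrix.vecTail (Matrix.vecTail (Matrix.vecTail (Matrix.vecTail (Matrix.vecTail u))))) := rfl

theorem vhead_const {α : Type*} {n : ℕ} (z : α) : Matrix.vecHead (fun _ : Fin (n+1) => z) = z := rfl
theorem vtail_const {α : Type*} {n : ℕ} (z : α) : Matrix.vecTail (fun _ : Fin (n+1) => z) = fun _ => z := rfl

set_option maxHeartbeats 2000000 in
/-- For the trefoil diagram D₃ (Δ = T - 1 + T⁻¹, G = A⁻¹ for the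
explicit 7×7 matrix A, positive crossings with one-based (i,j) pairs
(1,4), (5,2), (3,6), rotation numbers zero except φ₄ = −1),
ρ₁ = Δ²(Σ_c R₁(c) − Σ_k φ_k(g_{kk} − 1/2)) = −T² + 2T − 2 + 2T⁻¹ − T⁻².
Indices 1..7 correspond to 0..6 of `Fin 7`. -/
theorem stmt_15 :
    let T : RatFunc ℚ := RatFunc.X
    let A : Matrix (Fin 7) (Fin 7) (RatFunc ℚ) :=
      !![1, -T, 0, 0, T - 1, 0, 0;
         0, 1, -1, 0, 0, 0, 0;
         0, 0, 1, -T, 0, 0, T - 1;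
         0, 0, 0, 1, -1, 0, 0;
         0, 0, T - 1, 0, 1, -T, 0;
         0, 0, 0, 0, 0, 1, -1;
         0, 0, 0, 0, 0, 0, 1]
    let G : Matrix (Fin 7) (Fin 7) (RatFunc ℚ) := A⁻¹
    let Δ : RatFunc ℚ := T - 1 + T⁻¹
    -- R₁ for a positive crossing with incoming over-strand i, under-strand j,
    -- and j⁺ the successor of j
    let R₁ : Fin 7 → Fin 7 → Fin 7 → RatFunc ℚ := fun i j jp =>
      G j i * (G jp j + G j jp - G i j) - G i i * (G j jp - 1) - 1 / 2
    Δ ^ 2 * (R₁ 0 3 4 + R₁ 4 1 2 + R₁ 2 5 6 - (-1) * (G 3 3 - 1 / 2))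
      = -T ^ 2 + 2 * T - 2 + 2 * T⁻¹ - (T⁻¹) ^ 2 := by
  intro T A G Δ R₁
  have hT : T ≠ 0 := RatFunc.X_ne_zero
  have hq : (1 - T + T ^ 2 : RatFunc ℚ) ≠ 0 := by
    have hp : (1 - Polynomial.X + Polynomial.X ^ 2 : Polynomial ℚ) ≠ 0 := by
      intro h
      have := congrArg (Polynomial.eval 0) h
      simp at this
    have := RatFunc.algebraMap_ne_zero (K := ℚ) hp
    simpa [map_sub, map_add, map_pow, map_one, RatFunc.algebraMap_X] using this
  set q : RatFunc ℚ := 1 - T + T ^ 2 with hqdef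
  set B : Matrix (Fin 7) (Fin 7) (RatFunc ℚ) :=
      !![1, T, 1, T, 1, T, 1;
         0, 1, 1/q, T/q, T/q, T^2/q, 1;
         0, 0, 1/q, T/q, T/q, T^2/q, 1;
         0, 0, (1-T)/q, 1/q, 1/q, T/q, 1;
         0, 0, (1-T)/q, (T-T^2)/q, 1/q, T/q, 1;
         0, 0, 0, 0, 0, 1, 1;
         0, 0, 0, 0, 0, 0, 1] with hB
  have hAB : A * B = 1 := by
    ext i j
    fin_cases i <;> fin_cases j
    all_goals simp [A, hB, Matrix.mul_apply, Fin.sum_univ_succ, Matrix.one_apply,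
      Fin.ext_iff, Matrix.cons_val_zero, Matrix.cons_val_succ, vec7_five, vec7_six]
    all_goals try rw [if_neg (by decide)]
    all_goals try norm_num
    all_goals try field_simp
    all_goals try ring
  have hG : G = B := Matrix.inv_eq_right_inv hAB
  simp only [R₁, hG, Δ, hB, Matrix.of_apply, Matrix.cons_val_zero, Matrix.cons_val_one, Matrix.cons_val_two,
    Matrix.cons_val_one, Matrix.cons_val_two,
    Matrix.cons_val_three, Matrix.cons_val_four, vec7_five, vec7_six,
    Matrix.head_cons, Matrix.cons_val', Matrix.empty_val', Matrix.cons_val_fin_one,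
    Matrix.head_fin_const, vhead_const, vtail_const, Matrix.tail_cons]
  rw [hqdef]
  have hq' : (1 - T + T ^ 2 : RatFunc ℚ) ≠ 0 := by rw [← hqdef]; exact hq
  field_simp
  have h2 : (2 : RatFunc ℚ) ≠ 0 := by
    rw [← map_ofNat (algebraMap (Polynomial ℚ) (RatFunc ℚ)) 2]
    exact RatFunc.algebraMap_ne_zero (by norm_num)
  field_simp
  ring
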